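/- Let p be a prime and let m_0, ..., m_i be natural numbers with n = m_0 + ... + m_i. Then the multinomial coefficient n!/(m_0!···m_i!) is nonzero modulo p (i.e., its image in ZMod p is nonzero) if and only if the summation n = m_0 + ... + m_i has no carry over base p, that is, if and only if for every l ≥ 0 one has digit_l(m_0) + ... + digit_l(m_i) ≤ p − 1. -/

import Mathlib

/-- The `l`-th digit of `n` in base `p`. -/
def digit (p l n : ℕ) : ℕ := n / p ^ l % p

/-!
Lucas' theorem splits off the last base-`p` digit:
`C(a + b, a) ≡ C((a + b) % p, a % p) · C((a + b) / p, a / p) [MOD p]`.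
If the last digits of `a` and `b` do not carry, the first factor is `C(a % p + b % p, a % p)`,
a unit mod `p` because its top is below `p`, and the second factor is `C(a / p + b / p, a / p)`;
if they carry, then `(a + b) % p < a % p` and the first factor vanishes. Hence `C(a + b, a)` is
nonzero mod `p` exactly when `a + b` has no carry. The multinomial coefficient is a product of the
binomial coefficients `C(m_j + (m_{j+1} + ⋯ + m_i), m_j)`, and a carry-free sum has as digits the
sums of the digits, so these conditions combine into the digitwise bound on `m_0 + ⋯ + m_i`.
-/

section Digits

variable {p : ℕ}

lemma digit_zero (p n : ℕ) : digit p 0 n = n % p := by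
  simp [digit]

lemma digit_succ (p l n : ℕ) : digit p (l + 1) n = digit p l (n / p) := by
  simp [digit, Nat.div_div_eq_div_mul, pow_succ, mul_comm]

lemma forall_digit_add_lt_iff {a b : ℕ} :
    (∀ l, digit p l a + digit p l b < p) ↔
      a % p + b % p < p ∧ ∀ l, digit p l (a / p) + digit p l (b / p) < p := by
  simp only [← digit_zero, ← digit_succ]
  exact ⟨fun h => ⟨h 0, fun l => h (l + 1)⟩, fun ⟨h0, h⟩ l => l.casesOn h0 h⟩

lemma digit_add {a b : ℕ} (h : ∀ l, digit p l a + digit p l b < p) (l : ℕ) :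
    digit p l (a + b) = digit p l a + digit p l b := by
  induction l generalizing a b with
  | zero =>
    simp only [digit_zero]
    exact Nat.add_mod_of_add_mod_lt (forall_digit_add_lt_iff.1 h).1
  | succ l ih =>
    obtain ⟨h0, h⟩ := forall_digit_add_lt_iff.1 h
    rw [digit_succ, digit_succ, digit_succ, Nat.add_div_eq_of_add_mod_lt h0, ih h]

lemma digit_sum {ι : Type*} {s : Finset ι} {f : ι → ℕ}
    (h : ∀ l, ∑ j ∈ s, digit p l (f j) < p) (l : ℕ) :
    digit p l (∑ j ∈ s, f j) = ∑ j ∈ s, digit p l (f j) := by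
  classical
  induction s using Finset.induction_on generalizing l with
  | empty => simp [digit]
  | insert a s ha ih =>
    simp only [Finset.sum_insert ha] at h ⊢
    have hs : ∀ l, ∑ j ∈ s, digit p l (f j) < p := fun l => (Nat.le_add_left _ _).trans_lt (h l)
    rw [digit_add (fun l => by rw [ih hs l]; exact h l), ih hs l]

end Digits

section Prime

variable {p : ℕ} [hp : Fact p.Prime]

lemma cast_choose_ne_zero_of_lt {n k : ℕ} (hk : k ≤ n) (hn : n < p) :
    (n.choose k : ZMod p) ≠ 0 := by
  rw [Ne, ZMod.natCast_eq_zero_iff]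
  intro hdvd
  have hfact : p ∣ n.factorial :=
    hdvd.trans (Dvd.intro _ (by rw [← mul_assoc, Nat.choose_mul_factorial_mul_factorial hk]))
  exact hn.not_ge (hp.out.dvd_factorial.1 hfact)

lemma cast_choose_eq_choose_mod_mul_choose_div (n k : ℕ) :
    (n.choose k : ZMod p) = (n % p).choose (k % p) * (n / p).choose (k / p) := by
  exact_mod_cast
    (ZMod.natCast_eq_natCast_iff _ _ _).2 Choose.choose_modEq_choose_mod_mul_choose_div_nat

theorem cast_choose_add_ne_zero_iff (a b : ℕ) :
    ((a + b).choose a : ZMod p) ≠ 0 ↔ ∀ l, digit p l a + digit p l b < p := by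
  induction a using Nat.strong_induction_on generalizing b with
  | _ a ih =>
    rcases Nat.eq_zero_or_pos a with rfl | ha
    · simp [digit, Nat.mod_lt _ hp.out.pos]
    rw [cast_choose_eq_choose_mod_mul_choose_div, mul_ne_zero_iff, forall_digit_add_lt_iff]
    by_cases h0 : a % p + b % p < p
    · rw [Nat.add_mod_of_add_mod_lt h0, Nat.add_div_eq_of_add_mod_lt h0,
        ih (a / p) (Nat.div_lt_self ha hp.out.one_lt)]
      simp [h0, cast_choose_ne_zero_of_lt (Nat.le_add_right _ _) h0]
    · have hcarry : (a + b) % p < a % p := by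
        have hwrap := Nat.add_mod_add_of_le_add_mod (not_lt.1 h0)
        have hb := Nat.mod_lt b hp.out.pos
        omega
      simp [h0, Nat.choose_eq_zero_of_lt hcarry]

theorem cast_multinomial_ne_zero_iff {ι : Type*} (s : Finset ι) (f : ι → ℕ) :
    (Nat.multinomial s f : ZMod p) ≠ 0 ↔ ∀ l, ∑ j ∈ s, digit p l (f j) < p := by
  classical
  induction s using Finset.induction_on with
  | empty => simp [hp.out.pos]
  | insert a s ha ih =>
    simp only [Nat.multinomial_insert ha, Nat.cast_mul, mul_ne_zero_iff, ih,
      cast_choose_add_ne_zero_iff, Finset.sum_insert ha]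
    constructor
    · rintro ⟨h, hs⟩ l
      rw [← digit_sum hs l]
      exact h l
    · intro h
      have hs : ∀ l, ∑ j ∈ s, digit p l (f j) < p :=
        fun l => (Nat.le_add_left _ _).trans_lt (h l)
      exact ⟨fun l => by rw [digit_sum hs l]; exact h l, hs⟩

end Prime

theorem multinomial_ne_zero_iff_noCarry_general (p : ℕ) (hp : p.Prime) (i : ℕ)
    (m : Fin (i + 1) → ℕ) :
    ((Nat.multinomial Finset.univ m : ZMod p) ≠ 0) ↔
      ∀ l, (∑ j, digit p l (m j)) ≤ p - 1 := by
  have := Fact.mk hp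
  simp only [Nat.le_sub_one_iff_lt hp.pos]
  exact cast_multinomial_ne_zero_iff Finset.univ m

/-- The multinomial coefficient `n!/(m_0! ⋯ m_i!)` (with `n = m_0 + ⋯ + m_i`) is
nonzero modulo a prime `p` if and only if the summation `n = m_0 + ⋯ + m_i` has no
carry over base `p`, i.e. for every digit position `l` one has
`digit_l(m_0) + ⋯ + digit_l(m_i) ≤ p - 1`. -/
theorem multinomial_ne_zero_iff_noCarry (p : ℕ) (hp : p.Prime) (i : ℕ)
    (m : Fin (i + 1) → ℕ) (n : ℕ) (hn : n = ∑ j, m j) :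
    ((Nat.multinomial Finset.univ m : ZMod p) ≠ 0) ↔
      ∀ l, (∑ j, digit p l (m j)) ≤ p - 1 :=
  multinomial_ne_zero_iff_noCarry_general p hp i m
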